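/- arXiv:2205.02176 — 6 statements merged into one kernel-verified Lean document; each statement's English description precedes it below -/
import Mathlib

section
/- Let (Ω, ℱ, P) be a probability space, p ∈ [1, ∞), and β, γ ∈ ℝ with 0 ≤ β < γ ≤ p. Let X : Ω → ℝ be measurable with E[(X⁺)^{p/γ}] < ∞, let Y : Ω → [0, ∞) be measurable with E[Y^p] < ∞, and let x ∈ [0, ∞). Then p · x · E[X⁺ · Y^{p−γ}] · E[Y^p]^{β/p} ≤ p · x · E[(X⁺)^{p/γ}]^{γ/p} · E[Y^p]^{1−(γ−β)/p} ≤ E[(X⁺)^{p/γ}]^{γ/p} · ( (γ−β) · x^{p/(γ−β)} + (p+β−γ) · E[Y^p] ). -/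
/-!
The first inequality is Hölder's inequality for `X⁺ · Y^(p-γ)` with the conjugate exponents
`p/γ` and `p/(p-γ)`, after which the powers of `E[Y^p]` combine. The second is the weighted
AM–GM (Young) inequality `x · b^(1-q/p) ≤ (q/p) x^(p/q) + (1-q/p) b` with `q = γ - β`.
-/

open MeasureTheory

section Holder

variable {Ω : Type*} [MeasurableSpace Ω] {μ : Measure Ω}

lemma memLp_ofReal_of_integrable_rpow {f : Ω → ℝ} (hf : AEStronglyMeasurable f μ)
    (hf0 : ∀ ω, 0 ≤ f ω) {r : ℝ} (hr : 0 < r) (hint : Integrable (fun ω => f ω ^ r) μ) :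
    MemLp f (ENNReal.ofReal r) μ := by
  have hr0 : ENNReal.ofReal r ≠ 0 := ENNReal.ofReal_ne_zero_iff.2 hr
  refine (memLp_norm_rpow_iff hf hr0 ENNReal.ofReal_ne_top).1 ?_
  rw [ENNReal.div_self hr0 ENNReal.ofReal_ne_top, memLp_one_iff_integrable,
    ENNReal.toReal_ofReal hr.le]
  exact hint.congr (.of_forall fun ω => by simp only [Real.norm_of_nonneg (hf0 ω)])

lemma integral_mul_rpow_sub_le {f g : Ω → ℝ} (hf : AEMeasurable f μ) (hg : AEMeasurable g μ)
    (hf0 : ∀ ω, 0 ≤ f ω) (hg0 : ∀ ω, 0 ≤ g ω) {p γ : ℝ} (hγ : 0 < γ) (hγp : γ ≤ p)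
    (hfint : Integrable (fun ω => f ω ^ (p / γ)) μ) (hgint : Integrable (fun ω => g ω ^ p) μ) :
    ∫ ω, f ω * g ω ^ (p - γ) ∂μ ≤
      (∫ ω, f ω ^ (p / γ) ∂μ) ^ (γ / p) * (∫ ω, g ω ^ p ∂μ) ^ ((p - γ) / p) := by
  rcases hγp.eq_or_lt with rfl | hγp
  · simp [div_self hγ.ne']
  have hp : 0 < p := hγ.trans hγp
  have hpγ : 0 < p - γ := sub_pos.2 hγp
  have hconj : (p / γ).HolderConjugate (p / (p - γ)) := by
    rw [Real.holderConjugate_iff, inv_div, inv_div, lt_div_iff₀ hγ]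
    exact ⟨by linarith, by field_simp; ring⟩
  have hg_rpow : ∀ ω, (g ω ^ (p - γ)) ^ (p / (p - γ)) = g ω ^ p := fun ω => by
    rw [← Real.rpow_mul (hg0 ω), mul_div_cancel₀ p hpγ.ne']
  have hfLp := memLp_ofReal_of_integrable_rpow hf.aestronglyMeasurable hf0 (div_pos hp hγ) hfint
  have hgLp := memLp_ofReal_of_integrable_rpow (hg.pow_const (p - γ)).aestronglyMeasurable
    (fun ω => Real.rpow_nonneg (hg0 ω) _) (div_pos hp hpγ)
    (hgint.congr (.of_forall fun ω => (hg_rpow ω).symm))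
  have holder := integral_mul_le_Lp_mul_Lq_of_nonneg hconj (.of_forall hf0)
    (.of_forall fun ω => Real.rpow_nonneg (hg0 ω) _) hfLp hgLp
  simpa only [one_div_div, hg_rpow] using holder

end Holder

lemma mul_mul_rpow_one_sub_le {p q x b : ℝ} (hq : 0 < q) (hqp : q ≤ p) (hx : 0 ≤ x)
    (hb : 0 ≤ b) : p * x * b ^ (1 - q / p) ≤ q * x ^ (p / q) + (p - q) * b := by
  have hp : 0 < p := hq.trans_le hqp
  have hw : 0 ≤ 1 - q / p := sub_nonneg.2 ((div_le_one hp).2 hqp)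
  have amgm := Real.geom_mean_le_arith_mean2_weighted (div_pos hq hp).le hw
    (Real.rpow_nonneg hx (p / q)) hb (add_sub_cancel _ _)
  rw [← Real.rpow_mul hx, div_mul_div_cancel₀ hq.ne', div_self hp.ne', Real.rpow_one] at amgm
  calc p * x * b ^ (1 - q / p) = p * (x * b ^ (1 - q / p)) := by ring
    _ ≤ p * (q / p * x ^ (p / q) + (1 - q / p) * b) := by gcongr
    _ = q * x ^ (p / q) + (p - q) * b := by field_simp

theorem stmt_0_general {Ω : Type*} [MeasurableSpace Ω] (P : Measure Ω)
    (p β γ : ℝ) (hβ : 0 ≤ β) (hβγ : β < γ) (hγp : γ ≤ p)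
    (X Y : Ω → ℝ) (hXm : Measurable X) (hYm : Measurable Y) (hY0 : ∀ ω, 0 ≤ Y ω)
    (hXint : Integrable (fun ω => (max (X ω) 0) ^ (p / γ)) P)
    (hYint : Integrable (fun ω => Y ω ^ p) P)
    (x : ℝ) (hx : 0 ≤ x) :
    p * x * (∫ ω, max (X ω) 0 * Y ω ^ (p - γ) ∂P) * (∫ ω, Y ω ^ p ∂P) ^ (β / p) ≤
      p * x * (∫ ω, (max (X ω) 0) ^ (p / γ) ∂P) ^ (γ / p) *
        (∫ ω, Y ω ^ p ∂P) ^ (1 - (γ - β) / p) ∧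
    p * x * (∫ ω, (max (X ω) 0) ^ (p / γ) ∂P) ^ (γ / p) *
        (∫ ω, Y ω ^ p ∂P) ^ (1 - (γ - β) / p) ≤
      (∫ ω, (max (X ω) 0) ^ (p / γ) ∂P) ^ (γ / p) *
        ((γ - β) * x ^ (p / (γ - β)) + (p + β - γ) * ∫ ω, Y ω ^ p ∂P) := by
  have hγ : 0 < γ := hβ.trans_lt hβγ
  have hp : 0 < p := hγ.trans_le hγp
  have holder := integral_mul_rpow_sub_le (hXm.max measurable_const).aemeasurable
    hYm.aemeasurable (fun ω => le_max_right _ _) hY0 hγ hγp hXint hYint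
  set A := ∫ ω, (max (X ω) 0) ^ (p / γ) ∂P
  set B := ∫ ω, Y ω ^ p ∂P
  have hB : 0 ≤ B := integral_nonneg fun ω => Real.rpow_nonneg (hY0 ω) _
  have young := mul_mul_rpow_one_sub_le (p := p) (sub_pos.2 hβγ) (by linarith) hx hB
  constructor
  · rw [show 1 - (γ - β) / p = (p - γ) / p + β / p by field_simp; ring,
      Real.rpow_add_of_nonneg hB (div_nonneg (sub_nonneg.2 hγp) hp.le) (div_nonneg hβ hp.le)]
    calc _ ≤ p * x * (A ^ (γ / p) * B ^ ((p - γ) / p)) * B ^ (β / p) := by gcongr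
      _ = _ := by ring
  · rw [show p + β - γ = p - (γ - β) by ring]
    calc p * x * A ^ (γ / p) * B ^ (1 - (γ - β) / p)
        = A ^ (γ / p) * (p * x * B ^ (1 - (γ - β) / p)) := by ring
      _ ≤ A ^ (γ / p) * ((γ - β) * x ^ (p / (γ - β)) + (p - (γ - β)) * B) := by gcongr

/-- The combined Hölder–Young estimate (2.2) of the paper, in the case `β < γ`. -/
theorem stmt_0 {Ω : Type*} [MeasurableSpace Ω] (P : Measure Ω) [IsProbabilityMeasure P]
    (p β γ : ℝ) (hp : 1 ≤ p) (hβ : 0 ≤ β) (hβγ : β < γ) (hγp : γ ≤ p)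
    (X Y : Ω → ℝ) (hXm : Measurable X) (hYm : Measurable Y) (hY0 : ∀ ω, 0 ≤ Y ω)
    (hXint : Integrable (fun ω => (max (X ω) 0) ^ (p / γ)) P)
    (hYint : Integrable (fun ω => Y ω ^ p) P)
    (x : ℝ) (hx : 0 ≤ x) :
    p * x * (∫ ω, max (X ω) 0 * Y ω ^ (p - γ) ∂P) * (∫ ω, Y ω ^ p ∂P) ^ (β / p) ≤
      p * x * (∫ ω, (max (X ω) 0) ^ (p / γ) ∂P) ^ (γ / p) *
        (∫ ω, Y ω ^ p ∂P) ^ (1 - (γ - β) / p) ∧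
    p * x * (∫ ω, (max (X ω) 0) ^ (p / γ) ∂P) ^ (γ / p) *
        (∫ ω, Y ω ^ p ∂P) ^ (1 - (γ - β) / p) ≤
      (∫ ω, (max (X ω) 0) ^ (p / γ) ∂P) ^ (γ / p) *
        ((γ - β) * x ^ (p / (γ - β)) + (p + β - γ) * ∫ ω, Y ω ^ p ∂P) :=
  stmt_0_general P p β γ hβ hβγ hγp X Y hXm hYm hY0 hXint hYint x hx
end

section
/- Let ρ ∈ R_c, let D_ρ be the set of all (v, w) ∈ [0, ∞)² with Φ_ρ(v) + w < Φ_ρ(∞), and let Ψ_ρ : D_ρ → [0, ∞) be defined by Ψ_ρ(v, w) = Φ_ρ^{−1}(Φ_ρ(v) + w) (with Φ_ρ^{−1} extended to the closure of the range of Φ_ρ by its one-sided limits, in particular Φ_ρ^{−1}(Φ_ρ(0)) := 0). Then Ψ_ρ is continuous on D_ρ, nondecreasing in each coordinate, and locally Lipschitz continuous on D_ρ ∩ ((0, ∞) × [0, ∞)). -/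
open MeasureTheory Filter Set

/-- `Φ_ρ(w) = ∫_1^w 1/ρ(v) dv` for `ρ ∈ R_c`. -/
noncomputable def Phi (ρ : ℝ → ℝ) (w : ℝ) : ℝ := ∫ v in (1:ℝ)..w, 1 / ρ v

/-- `Φ_ρ(0) = lim_{v↓0} Φ_ρ(v) ∈ [-∞, ∞)`, realised as an infimum in `EReal`
(by strict monotonicity of `Φ_ρ` this is the one-sided limit). -/
noncomputable def Phi0 (ρ : ℝ → ℝ) : EReal :=
  sInf ((fun u => ((Phi ρ u : ℝ) : EReal)) '' Set.Ioi (0:ℝ))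

/-- `Φ_ρ(∞) = lim_{v↑∞} Φ_ρ(v) ∈ (-∞, ∞]`, realised as a supremum in `EReal`. -/
noncomputable def PhiInfty (ρ : ℝ → ℝ) : EReal :=
  sSup ((fun u => ((Phi ρ u : ℝ) : EReal)) '' Set.Ioi (0:ℝ))

/-- The `EReal`-valued extension of `Φ_ρ` to `[0,∞)`. -/
noncomputable def PhiE (ρ : ℝ → ℝ) (v : ℝ) : EReal :=
  if v = 0 then Phi0 ρ else ((Phi ρ v : ℝ) : EReal)

/-- `D_ρ`, the set of all `(v,w) ∈ [0,∞)²` with `Φ_ρ(v) + w < Φ_ρ(∞)`. -/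
def Drho (ρ : ℝ → ℝ) : Set (ℝ × ℝ) :=
  {q | 0 ≤ q.1 ∧ 0 ≤ q.2 ∧ PhiE ρ q.1 + (q.2 : EReal) < PhiInfty ρ}

/-- `Ψ_ρ(v,w) = Φ_ρ⁻¹(Φ_ρ(v) + w)`, where `Φ_ρ⁻¹` is extended to the closure of the
range of `Φ_ρ` by its one-sided limits (in particular `Φ_ρ⁻¹(Φ_ρ(0)) = 0`); this
extension is realised as `sup {u > 0 | Φ_ρ(u) ≤ Φ_ρ(v) + w}` (with `sup ∅ = 0`). -/
noncomputable def Psi (ρ : ℝ → ℝ) (v w : ℝ) : ℝ :=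
  sSup {u : ℝ | 0 < u ∧ ((Phi ρ u : ℝ) : EReal) ≤ PhiE ρ v + (w : EReal)}

/-!
On `(0, ∞)`, `Φ_ρ` is a `C¹` function with derivative `1/ρ > 0`, hence an increasing bijection
onto the open interval `(Φ_ρ(0), Φ_ρ(∞))`. Thus `Ψ_ρ(v, w) = Φ_ρ⁻¹(y)` for the target value
`y = Φ_ρ(v) + w ∈ [-∞, Φ_ρ(∞))`, where the extended inverse `Φ_ρ⁻¹` is monotone, vanishes for
`y ≤ Φ_ρ(0)`, and is continuous below `Φ_ρ(∞)` by the order characterisation of suprema; since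
`(v, w) ↦ y` is continuous, so is `Ψ_ρ`. On the open interval, `Φ_ρ⁻¹` is `C¹` with derivative
`ρ ∘ Φ_ρ⁻¹`, so for `v > 0` the map `Ψ_ρ` is strictly differentiable, hence locally Lipschitz.
-/

open Topology

/-- The extended inverse `Φ_ρ⁻¹` from the definition of `Psi`. -/
noncomputable def PhiInv (ρ : ℝ → ℝ) (y : EReal) : ℝ :=
  sSup {u : ℝ | 0 < u ∧ ((Phi ρ u : ℝ) : EReal) ≤ y}

lemma Psi_eq_PhiInv (ρ : ℝ → ℝ) (v w : ℝ) : Psi ρ v w = PhiInv ρ (PhiE ρ v + w) := rfl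

lemma PhiInv_nonneg (ρ : ℝ → ℝ) (y : EReal) : 0 ≤ PhiInv ρ y :=
  Real.sSup_nonneg fun _ hu => hu.1.le

lemma PhiE_zero (ρ : ℝ → ℝ) : PhiE ρ 0 = Phi0 ρ := if_pos rfl

lemma PhiE_of_pos (ρ : ℝ → ℝ) {v : ℝ} (hv : 0 < v) : PhiE ρ v = Phi ρ v := if_neg hv.ne'

section Phi

variable {ρ : ℝ → ℝ} (hρc : ContinuousOn ρ (Ici 0)) (hρpos : ∀ v > (0:ℝ), 0 < ρ v)
include hρc hρpos

lemma continuousOn_one_div_Ioi : ContinuousOn (fun v => 1 / ρ v) (Ioi 0) :=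
  continuousOn_const.div (hρc.mono Ioi_subset_Ici_self) fun v hv => (hρpos v hv).ne'

lemma Phi_hasDerivAt {x : ℝ} (hx : 0 < x) : HasDerivAt (Phi ρ) (1 / ρ x) x := by
  have hcont := continuousOn_one_div_Ioi hρc hρpos
  have hsub : uIcc 1 x ⊆ Ioi 0 := fun v hv => lt_of_lt_of_le (lt_min one_pos hx) hv.1
  exact intervalIntegral.integral_hasDerivAt_right ((hcont.mono hsub).intervalIntegrable)
    (hcont.stronglyMeasurableAtFilter isOpen_Ioi x hx) (hcont.continuousAt (Ioi_mem_nhds hx))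

lemma Phi_hasStrictDerivAt {x : ℝ} (hx : 0 < x) : HasStrictDerivAt (Phi ρ) (1 / ρ x) x :=
  hasStrictDerivAt_of_hasDerivAt_of_continuousAt
    (eventually_gt_nhds hx |>.mono fun _ hy => Phi_hasDerivAt hρc hρpos hy)
    ((continuousOn_one_div_Ioi hρc hρpos).continuousAt (Ioi_mem_nhds hx))

lemma Phi_continuousOn : ContinuousOn (Phi ρ) (Ioi 0) := fun _ hx =>
  (Phi_hasDerivAt hρc hρpos hx).continuousAt.continuousWithinAt

lemma Phi_strictMonoOn : StrictMonoOn (Phi ρ) (Ioi 0) := by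
  refine strictMonoOn_of_deriv_pos (convex_Ioi 0) (Phi_continuousOn hρc hρpos) fun x hx => ?_
  rw [interior_Ioi] at hx
  rw [(Phi_hasDerivAt hρc hρpos hx).deriv]
  exact one_div_pos.2 (hρpos x hx)

lemma Phi0_lt_Phi {u : ℝ} (hu : 0 < u) : Phi0 ρ < Phi ρ u :=
  (sInf_le (mem_image_of_mem _ (half_pos hu))).trans_lt <| EReal.coe_lt_coe_iff.2 <|
    Phi_strictMonoOn hρc hρpos (half_pos hu) hu (half_lt_self hu)

lemma Phi_lt_PhiInfty {u : ℝ} (hu : 0 < u) : (Phi ρ u : EReal) < PhiInfty ρ :=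
  (EReal.coe_lt_coe_iff.2 <| Phi_strictMonoOn hρc hρpos hu (hu.trans (lt_add_one u))
    (lt_add_one u)).trans_le (le_sSup (mem_image_of_mem _ (hu.trans (lt_add_one u))))

lemma exists_Phi_eq {y : ℝ} (h0 : Phi0 ρ < y) (h1 : (y : EReal) < PhiInfty ρ) :
    ∃ u, 0 < u ∧ Phi ρ u = y := by
  obtain ⟨_, ⟨a, ha, rfl⟩, hay⟩ := sInf_lt_iff.1 h0
  obtain ⟨_, ⟨b, hb, rfl⟩, hyb⟩ := lt_sSup_iff.1 h1
  exact isPreconnected_Ioi.intermediate_value ha hb (Phi_continuousOn hρc hρpos)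
    ⟨(EReal.coe_lt_coe_iff.1 hay).le, (EReal.coe_lt_coe_iff.1 hyb).le⟩

lemma Phi0_le_PhiE {v : ℝ} (hv : 0 ≤ v) : Phi0 ρ ≤ PhiE ρ v := by
  rcases hv.eq_or_lt with rfl | hv
  · exact (PhiE_zero ρ).ge
  · exact PhiE_of_pos ρ hv ▸ (Phi0_lt_Phi hρc hρpos hv).le

lemma PhiE_monotoneOn : MonotoneOn (PhiE ρ) (Ici 0) := by
  intro a ha b hb hab
  rcases (show (0:ℝ) ≤ a from ha).eq_or_lt with rfl | ha
  · exact PhiE_zero ρ ▸ Phi0_le_PhiE hρc hρpos hb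
  · rw [PhiE_of_pos ρ ha, PhiE_of_pos ρ (ha.trans_le hab)]
    exact EReal.coe_le_coe_iff.2 <|
      (Phi_strictMonoOn hρc hρpos).monotoneOn ha (ha.trans_le hab) hab

lemma PhiE_continuousWithinAt {v : ℝ} (hv : 0 ≤ v) : ContinuousWithinAt (PhiE ρ) (Ici 0) v := by
  rcases hv.eq_or_lt with rfl | hv
  · rw [ContinuousWithinAt, PhiE_zero]
    refine tendsto_order.2 ⟨fun a ha => ?_, fun b hb => ?_⟩
    · filter_upwards [self_mem_nhdsWithin] with v hv using ha.trans_le (Phi0_le_PhiE hρc hρpos hv)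
    · obtain ⟨_, ⟨δ, hδ, rfl⟩, hδb⟩ := sInf_lt_iff.1 hb
      filter_upwards [self_mem_nhdsWithin, nhdsWithin_le_nhds (Iio_mem_nhds hδ)] with v hv hvδ
      exact (PhiE_monotoneOn hρc hρpos hv (mem_Ici.2 hδ.le) hvδ.le).trans_lt
        (PhiE_of_pos ρ hδ ▸ hδb)
  · refine ContinuousAt.continuousWithinAt ?_
    refine (continuous_coe_real_ereal.continuousAt.comp
      ((Phi_continuousOn hρc hρpos).continuousAt (Ioi_mem_nhds hv))).congr ?_
    filter_upwards [eventually_gt_nhds hv] with u hu using (PhiE_of_pos ρ hu).symm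

lemma bddAbove_of_lt_PhiInfty {y : EReal} (hy : y < PhiInfty ρ) :
    BddAbove {u : ℝ | 0 < u ∧ ((Phi ρ u : ℝ) : EReal) ≤ y} := by
  obtain ⟨_, ⟨b, hb, rfl⟩, hyb⟩ := lt_sSup_iff.1 hy
  refine ⟨b, fun u ⟨hu, huy⟩ => ?_⟩
  exact (Phi_strictMonoOn hρc hρpos).le_iff_le hu hb |>.1
    (EReal.coe_le_coe_iff.1 (huy.trans hyb.le))

lemma le_PhiInv {y : EReal} (hy : y < PhiInfty ρ) {u : ℝ} (hu : 0 < u) (huy : Phi ρ u ≤ y) :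
    u ≤ PhiInv ρ y :=
  le_csSup (bddAbove_of_lt_PhiInfty hρc hρpos hy) ⟨hu, huy⟩

lemma PhiInv_le {y : EReal} {c : ℝ} (hc : 0 < c) (hyc : y ≤ Phi ρ c) : PhiInv ρ y ≤ c :=
  Real.sSup_le (fun _ ⟨hu, huy⟩ => (Phi_strictMonoOn hρc hρpos).le_iff_le hu hc |>.1
    (EReal.coe_le_coe_iff.1 (huy.trans hyc))) hc.le

lemma PhiInv_Phi {u : ℝ} (hu : 0 < u) : PhiInv ρ (Phi ρ u) = u :=
  (PhiInv_le hρc hρpos hu le_rfl).antisymm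
    (le_PhiInv hρc hρpos (Phi_lt_PhiInfty hρc hρpos hu) hu le_rfl)

lemma PhiInv_pos_and_Phi_PhiInv {y : ℝ} (h0 : Phi0 ρ < y) (h1 : (y : EReal) < PhiInfty ρ) :
    0 < PhiInv ρ y ∧ Phi ρ (PhiInv ρ y) = y := by
  obtain ⟨u, hu, rfl⟩ := exists_Phi_eq hρc hρpos h0 h1
  rw [PhiInv_Phi hρc hρpos hu]
  exact ⟨hu, rfl⟩

lemma PhiInv_monotoneOn : MonotoneOn (PhiInv ρ) (Iio (PhiInfty ρ)) := fun _ _ _ hy' hyy' =>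
  Real.sSup_le (fun _ ⟨hu, huy⟩ => le_PhiInv hρc hρpos hy' hu (huy.trans hyy'))
    (PhiInv_nonneg ρ _)

lemma PhiInv_continuousAt {y : EReal} (hy : y < PhiInfty ρ) : ContinuousAt (PhiInv ρ) y := by
  refine tendsto_order.2 ⟨fun a ha => ?_, fun b hb => ?_⟩
  · rcases lt_or_ge a 0 with ha0 | ha0
    · exact Eventually.of_forall fun z => ha0.trans_le (PhiInv_nonneg ρ z)
    obtain ⟨u, ⟨hu, huy⟩, hau⟩ : ∃ u ∈ {u : ℝ | 0 < u ∧ ((Phi ρ u : ℝ) : EReal) ≤ y}, a < u := by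
      by_contra! h
      exact ha.not_ge (Real.sSup_le h ha0)
    -- `c = (a + u) / 2` has `Φ c < y`, an open condition on `y`
    have hc : 0 < (a + u) / 2 := by linarith
    have hcy : (Phi ρ ((a + u) / 2) : EReal) < y := (EReal.coe_lt_coe_iff.2 <|
      Phi_strictMonoOn hρc hρpos hc hu (by linarith)).trans_le huy
    filter_upwards [eventually_gt_nhds hcy, eventually_lt_nhds hy] with z hcz hz
    exact (show a < (a + u) / 2 by linarith).trans_le (le_PhiInv hρc hρpos hz hc hcz.le)
  · have hc : 0 < (PhiInv ρ y + b) / 2 := by linarith [PhiInv_nonneg ρ y]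
    have hyc : y < Phi ρ ((PhiInv ρ y + b) / 2) := by
      by_contra! hcy
      linarith [le_PhiInv hρc hρpos hy hc hcy]
    filter_upwards [eventually_lt_nhds hyc] with z hz
    exact (PhiInv_le hρc hρpos hc hz.le).trans_lt (by linarith)

lemma PhiInv_hasStrictDerivAt {y : ℝ} (h0 : Phi0 ρ < y) (h1 : (y : EReal) < PhiInfty ρ) :
    HasStrictDerivAt (fun z : ℝ => PhiInv ρ z) (ρ (PhiInv ρ y)) y := by
  obtain ⟨hpos, -⟩ := PhiInv_pos_and_Phi_PhiInv hρc hρpos h0 h1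
  have hinv : ∀ᶠ z : ℝ in 𝓝 y, Phi ρ (PhiInv ρ z) = z := by
    filter_upwards [(isOpen_Ioo.preimage continuous_coe_real_ereal).mem_nhds ⟨h0, h1⟩]
      with z hz using (PhiInv_pos_and_Phi_PhiInv hρc hρpos hz.1 hz.2).2
  have := (Phi_hasStrictDerivAt hρc hρpos hpos).of_local_left_inverse
    ((PhiInv_continuousAt hρc hρpos h1).comp continuous_coe_real_ereal.continuousAt)
    (one_div_ne_zero (hρpos _ hpos).ne') hinv
  rwa [one_div, inv_inv] at this

lemma continuousOn_PhiE_add :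
    ContinuousOn (fun q : ℝ × ℝ => PhiE ρ q.1 + (q.2 : EReal)) (Drho ρ) := fun _ hq =>
  (EReal.continuousAt_add (Or.inr (EReal.coe_ne_bot _))
      (Or.inr (EReal.coe_ne_top _))).comp_continuousWithinAt
    (((PhiE_continuousWithinAt hρc hρpos hq.1).comp continuousWithinAt_fst fun _ hr => hr.1).prodMk
      (continuous_coe_real_ereal.comp continuous_snd).continuousWithinAt)

lemma Psi_continuousOn : ContinuousOn (fun q : ℝ × ℝ => Psi ρ q.1 q.2) (Drho ρ) := fun q hq =>
  (PhiInv_continuousAt hρc hρpos hq.2.2).comp_continuousWithinAt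
    (f := fun q : ℝ × ℝ => PhiE ρ q.1 + (q.2 : EReal)) (continuousOn_PhiE_add hρc hρpos q hq)

lemma Psi_le_Psi {q r : ℝ × ℝ} (hq : q ∈ Drho ρ) (hr : r ∈ Drho ρ) (h1 : q.1 ≤ r.1)
    (h2 : q.2 ≤ r.2) : Psi ρ q.1 q.2 ≤ Psi ρ r.1 r.2 :=
  PhiInv_monotoneOn hρc hρpos hq.2.2 hr.2.2 <|
    add_le_add (PhiE_monotoneOn hρc hρpos hq.1 (hq.1.trans h1) h1) (EReal.coe_le_coe_iff.2 h2)

lemma Psi_locallyLipschitzOn :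
    LocallyLipschitzOn (Drho ρ ∩ Ioi 0 ×ˢ Ici 0) (fun q : ℝ × ℝ => Psi ρ q.1 q.2) := by
  rintro ⟨v, w⟩ hq
  obtain ⟨⟨-, hw, hlt⟩, hv, -⟩ := hq
  change 0 < v at hv
  change PhiE ρ v + (w : EReal) < PhiInfty ρ at hlt
  rw [PhiE_of_pos ρ hv, ← EReal.coe_add] at hlt
  have h0 : Phi0 ρ < ((Phi ρ v + w : ℝ) : EReal) :=
    (Phi0_lt_Phi hρc hρpos hv).trans_le (EReal.coe_le_coe_iff.2 (by linarith))
  have htarget : HasStrictFDerivAt (Phi ρ ∘ Prod.fst + Prod.snd) _ (v, w) :=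
    ((Phi_hasStrictDerivAt hρc hρpos hv).comp_hasStrictFDerivAt (v, w)
      (hasStrictFDerivAt_fst (𝕜 := ℝ) (F := ℝ))).add (hasStrictFDerivAt_snd (𝕜 := ℝ))
  have hderiv :=
    (PhiInv_hasStrictDerivAt hρc hρpos h0 hlt).comp_hasStrictFDerivAt (v, w) htarget
  obtain ⟨K, t, ht, hK⟩ := hderiv.exists_lipschitzOnWith
  have hPsi : ∀ q ∈ Drho ρ ∩ Ioi 0 ×ˢ Ici 0,
      Psi ρ q.1 q.2 = PhiInv ρ ((Phi ρ q.1 + q.2 : ℝ) : EReal) := fun q hq => by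
    rw [Psi_eq_PhiInv, PhiE_of_pos ρ hq.2.1, EReal.coe_add]
  refine ⟨K, _ ∩ t, inter_mem_nhdsWithin _ ht, fun q hq r hr => ?_⟩
  simp only [hPsi q hq.1, hPsi r hr.1]
  exact hK hq.2 hr.2

end Phi

theorem stmt_2_general (ρ : ℝ → ℝ) (hρc : ContinuousOn ρ (Set.Ici 0))
    (hρpos : ∀ v > (0:ℝ), 0 < ρ v) :
    ContinuousOn (fun q : ℝ × ℝ => Psi ρ q.1 q.2) (Drho ρ) ∧
    (∀ q ∈ Drho ρ, ∀ r ∈ Drho ρ, q.1 ≤ r.1 → q.2 ≤ r.2 →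
      Psi ρ q.1 q.2 ≤ Psi ρ r.1 r.2) ∧
    LocallyLipschitzOn (Drho ρ ∩ Set.Ioi (0:ℝ) ×ˢ Set.Ici (0:ℝ))
      (fun q : ℝ × ℝ => Psi ρ q.1 q.2) :=
  ⟨Psi_continuousOn hρc hρpos, fun _ hq _ hr => Psi_le_Psi hρc hρpos hq hr,
    Psi_locallyLipschitzOn hρc hρpos⟩

/-- For `ρ ∈ R_c`, the function `Ψ_ρ` is continuous on `D_ρ`, nondecreasing in each
coordinate, and locally Lipschitz continuous on `D_ρ ∩ ((0,∞) × [0,∞))`. -/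
theorem stmt_2 (ρ : ℝ → ℝ) (hρc : ContinuousOn ρ (Set.Ici 0)) (hρ0 : ρ 0 = 0)
    (hρpos : ∀ v > (0:ℝ), 0 < ρ v) :
    ContinuousOn (fun q : ℝ × ℝ => Psi ρ q.1 q.2) (Drho ρ) ∧
    (∀ q ∈ Drho ρ, ∀ r ∈ Drho ρ, q.1 ≤ r.1 → q.2 ≤ r.2 →
      Psi ρ q.1 q.2 ≤ Psi ρ r.1 r.2) ∧
    LocallyLipschitzOn (Drho ρ ∩ Set.Ioi (0:ℝ) ×ˢ Set.Ici (0:ℝ))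
      (fun q : ℝ × ℝ => Psi ρ q.1 q.2) :=
  stmt_2_general ρ hρc hρpos
end

section
/- Let m̂, m, d ∈ ℕ, p ∈ [2, ∞), A be a real m̂ × m matrix, B a real m × d matrix, and x ∈ ℝ^m with Ax ≠ 0. For f(x) = |Ax|^p it holds that tr(D²f(x) · B Bᵀ) = p · |Ax|^{p−2} · ( ‖AB‖² + (p − 2) · |(AB)ᵀ Ax|² / |Ax|² ), where ‖AB‖ is the Hilbert–Schmidt (Frobenius) norm of AB. -/
/-!
With the Gram form `Q z = Az ⬝ Az` one has `|Az|ᵖ = Q z ^ (p/2)`, and `Q > 0` near `x`. The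
chain rule for a power of a positive `C²` function, together with `DQ(y) v = 2 Ay ⬝ Av` and
`D²Q = 2 AᵀA`, gives the Hessian in closed form,
`D²f(x) = p |Ax|^{p-2} (AᵀA + (p-2)/|Ax|² · w wᵀ)` with `w = AᵀAx`.
Multiplying by `BBᵀ` and taking traces, `tr(AᵀA BBᵀ) = tr((AB)(AB)ᵀ) = ‖AB‖²` and
`tr(w wᵀ BBᵀ) = |Bᵀw|² = |(AB)ᵀAx|²`.
-/

open Matrix

/-- The Euclidean norm on `ℝ^n`. -/
noncomputable def eNorm {n : ℕ} (x : Fin n → ℝ) : ℝ := Real.sqrt (∑ i, x i ^ 2)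

/-- The Hilbert–Schmidt (Frobenius) norm of a real matrix. -/
noncomputable def hsNorm {d m : ℕ} (A : Matrix (Fin d) (Fin m) ℝ) : ℝ :=
  Real.sqrt (∑ i, ∑ j, A i j ^ 2)

theorem dotProduct_self_pos {n R : Type*} [Fintype n] [Ring R] [LinearOrder R]
    [IsStrictOrderedRing R] {v : n → R} (hv : v ≠ 0) : 0 < v ⬝ᵥ v :=
  lt_of_le_of_ne (Finset.sum_nonneg fun i _ => mul_self_nonneg (v i))
    (Ne.symm (dotProduct_self_eq_zero.not.mpr hv))

theorem dotProduct_mulVec_single_one {ι κ R : Type*} [Fintype ι] [Fintype κ] [DecidableEq κ]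
    [CommSemiring R] (A : Matrix ι κ R) (v : ι → R) (j : κ) :
    v ⬝ᵥ A *ᵥ Pi.single j 1 = (Aᵀ *ᵥ v) j := by
  rw [dotProduct_mulVec, dotProduct_single_one, mulVec_transpose]

theorem eNorm_sq {n : ℕ} (v : Fin n → ℝ) : eNorm v ^ 2 = v ⬝ᵥ v := by
  rw [eNorm, Real.sq_sqrt (Finset.sum_nonneg fun i _ => sq_nonneg (v i))]
  simp only [dotProduct, sq]

theorem eNorm_rpow {n : ℕ} (v : Fin n → ℝ) (q : ℝ) : eNorm v ^ q = (v ⬝ᵥ v) ^ (q / 2) := by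
  rw [← eNorm_sq, ← Real.rpow_natCast, ← Real.rpow_mul (x := eNorm v) (Real.sqrt_nonneg _)]
  ring_nf

theorem hsNorm_sq {d m : ℕ} (M : Matrix (Fin d) (Fin m) ℝ) :
    hsNorm M ^ 2 = (M * Mᵀ).trace := by
  rw [hsNorm, Real.sq_sqrt (by positivity)]
  simp [trace, mul_apply, sq]

theorem trace_transpose_mul_self_mul_mul_transpose {mh m d : ℕ} (A : Matrix (Fin mh) (Fin m) ℝ)
    (B : Matrix (Fin m) (Fin d) ℝ) :
    (Aᵀ * A * (B * Bᵀ)).trace = hsNorm (A * B) ^ 2 := by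
  rw [hsNorm_sq, transpose_mul, Matrix.mul_assoc, trace_mul_comm]
  simp only [Matrix.mul_assoc]

theorem trace_vecMulVec_self_mul_mul_transpose {m d : ℕ} (w : Fin m → ℝ)
    (B : Matrix (Fin m) (Fin d) ℝ) :
    (vecMulVec w w * (B * Bᵀ)).trace = eNorm (Bᵀ *ᵥ w) ^ 2 := by
  rw [vecMulVec_mul, trace_vecMulVec, eNorm_sq, ← vecMul_vecMul, vecMul_transpose,
    dotProduct_mulVec, ← mulVec_transpose]

theorem fderiv_fderiv_rpow_apply {E : Type*} [NormedAddCommGroup E] [NormedSpace ℝ E]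
    {g : E → ℝ} {x : E} (hg : ContDiffAt ℝ 2 g x) (hx : 0 < g x) (s : ℝ) (u v : E) :
    fderiv ℝ (fun y => fderiv ℝ (fun z => g z ^ s) y v) x u =
      s * (s - 1) * g x ^ (s - 2) * fderiv ℝ g x u * fderiv ℝ g x v
        + s * g x ^ (s - 1) * fderiv ℝ (fun y => fderiv ℝ g y v) x u := by
  have h_near : ∀ᶠ y in nhds x, 0 < g y ∧ DifferentiableAt ℝ g y :=
    (hg.continuousAt.eventually (eventually_gt_nhds hx)).and
      (hg.eventually (by simp) |>.mono fun y hy => hy.differentiableAt (by simp))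
  have h_first : (fun y => fderiv ℝ (fun z => g z ^ s) y v)
      =ᶠ[nhds x] fun y => s * g y ^ (s - 1) * fderiv ℝ g y v :=
    h_near.mono fun y ⟨hpos, hdiff⟩ => by
      simp [(hdiff.hasFDerivAt.rpow_const (Or.inl hpos.ne')).fderiv, mul_assoc]
  have h_pow : HasFDerivAt (fun y => g y ^ (s - 1))
      (((s - 1) * g x ^ (s - 1 - 1)) • fderiv ℝ g x) x :=
    (hg.differentiableAt (by simp)).hasFDerivAt.rpow_const (Or.inl hx.ne')
  have h_dir : DifferentiableAt ℝ (fun y => fderiv ℝ g y v) x :=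
    ((hg.fderiv_right (m := 1) (by norm_num)).differentiableAt (by simp)).clm_apply
      (differentiableAt_const v)
  rw [h_first.fderiv_eq, ((h_pow.const_mul s).fun_mul h_dir.hasFDerivAt).fderiv]
  simp only [_root_.add_apply, _root_.smul_apply, smul_eq_mul]
  rw [show s - 1 - 1 = s - 2 by ring]
  ring

section GramForm

variable {ι κ : Type*} [Fintype ι] [Fintype κ] (A : Matrix ι κ ℝ)

theorem contDiff_dotProduct_mulVec_self {n : WithTop ℕ∞} :
    ContDiff ℝ n (fun z => A *ᵥ z ⬝ᵥ A *ᵥ z) := by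
  have hL := A.mulVecLin.toContinuousLinearMap.contDiff (n := n)
  exact (dotProductBilin ℝ ℝ).toContinuousBilinearMap.isBoundedBilinearMap.contDiff.comp
    (hL.prodMk hL)

theorem fderiv_dotProduct_mulVec_self_apply (y v : κ → ℝ) :
    fderiv ℝ (fun z => A *ᵥ z ⬝ᵥ A *ᵥ z) y v = 2 * (A *ᵥ y ⬝ᵥ A *ᵥ v) := by
  have hL := A.mulVecLin.toContinuousLinearMap.hasFDerivAt (x := y)
  have hQ : HasFDerivAt (fun z => A *ᵥ z ⬝ᵥ A *ᵥ z) _ y :=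
    ContinuousLinearMap.hasFDerivAt_of_bilinear
      (dotProductBilin ℝ ℝ : (ι → ℝ) →ₗ[ℝ] (ι → ℝ) →ₗ[ℝ] ℝ).toContinuousBilinearMap hL hL
  rw [hQ.fderiv]
  simp only [_root_.add_apply, ContinuousLinearMap.precompR_apply,
    ContinuousLinearMap.precompL_apply, ContinuousLinearMap.compL_apply,
    ContinuousLinearMap.comp_apply, LinearMap.coe_toContinuousLinearMap', mulVecBilin_apply,
    LinearMap.toContinuousBilinearMap_apply, dotProductBilin_apply_apply,
    dotProduct_comm (A *ᵥ v)]
  ring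

theorem fderiv_fderiv_dotProduct_mulVec_self_apply (x u v : κ → ℝ) :
    fderiv ℝ (fun y => fderiv ℝ (fun z => A *ᵥ z ⬝ᵥ A *ᵥ z) y v) x u =
      2 * (A *ᵥ u ⬝ᵥ A *ᵥ v) := by
  simp only [fderiv_dotProduct_mulVec_self_apply]
  have h : HasFDerivAt (fun y => 2 * (A *ᵥ y ⬝ᵥ A *ᵥ v))
      ((2 : ℝ) • ((dotProductBilin ℝ ℝ).toContinuousBilinearMap.flip (A *ᵥ v)).comp
        A.mulVecLin.toContinuousLinearMap) x :=
    (((dotProductBilin ℝ ℝ).toContinuousBilinearMap.flip (A *ᵥ v)).comp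
      A.mulVecLin.toContinuousLinearMap).hasFDerivAt.const_mul (2 : ℝ)
  simp [h.fderiv]

end GramForm
noncomputable def hessianMatrix {n : ℕ} (f : (Fin n → ℝ) → ℝ) (x : Fin n → ℝ) :
    Matrix (Fin n) (Fin n) ℝ :=
  Matrix.of fun i j => fderiv ℝ (fun y => fderiv ℝ f y (Pi.single j 1)) x (Pi.single i 1)

theorem hessianMatrix_eNorm_mulVec_rpow {mh m : ℕ} (p : ℝ) (A : Matrix (Fin mh) (Fin m) ℝ)
    (x : Fin m → ℝ) (hAx : A *ᵥ x ≠ 0) :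
    hessianMatrix (fun z => eNorm (A *ᵥ z) ^ p) x =
      (p * eNorm (A *ᵥ x) ^ (p - 2)) • (Aᵀ * A + ((p - 2) / eNorm (A *ᵥ x) ^ 2) •
        vecMulVec (Aᵀ *ᵥ (A *ᵥ x)) (Aᵀ *ᵥ (A *ᵥ x))) := by
  have hQ : 0 < A *ᵥ x ⬝ᵥ A *ᵥ x := dotProduct_self_pos hAx
  have hf : (fun z => eNorm (A *ᵥ z) ^ p) = fun z => (A *ᵥ z ⬝ᵥ A *ᵥ z) ^ (p / 2) := by
    simp only [eNorm_rpow]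
  ext i j
  rw [hessianMatrix, of_apply, hf,
    fderiv_fderiv_rpow_apply (contDiff_dotProduct_mulVec_self A).contDiffAt hQ,
    fderiv_fderiv_dotProduct_mulVec_self_apply, fderiv_dotProduct_mulVec_self_apply,
    fderiv_dotProduct_mulVec_self_apply, eNorm_rpow, eNorm_sq]
  have h_gram : A *ᵥ Pi.single i 1 ⬝ᵥ A *ᵥ Pi.single j 1 = (Aᵀ * A) i j := by
    rw [dotProduct_comm, dotProduct_mulVec_single_one, mulVec_mulVec, mulVec_single_one, col_apply]
  rw [dotProduct_mulVec_single_one, dotProduct_mulVec_single_one, h_gram]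
  simp only [Matrix.smul_apply, Matrix.add_apply, vecMulVec_apply, smul_eq_mul]
  set Q := A *ᵥ x ⬝ᵥ A *ᵥ x
  have h_exp : p / 2 - 1 = (p - 2) / 2 := by ring
  have h_exp' : Q ^ (p / 2 - 2) = Q ^ ((p - 2) / 2) / Q := by
    rw [← Real.rpow_sub_one hQ.ne']
    ring_nf
  rw [h_exp, h_exp']
  field_simp
  ring

theorem stmt_7_general (mh m d : ℕ) (p : ℝ)
    (A : Matrix (Fin mh) (Fin m) ℝ) (B : Matrix (Fin m) (Fin d) ℝ)
    (x : Fin m → ℝ) (hAx : A.mulVec x ≠ 0) :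
    (Matrix.of (fun i j =>
        fderiv ℝ (fun y : Fin m → ℝ =>
            fderiv ℝ (fun z : Fin m → ℝ => eNorm (A.mulVec z) ^ p) y (Pi.single j 1))
          x (Pi.single i 1)) * (B * Bᵀ)).trace =
      p * eNorm (A.mulVec x) ^ (p - 2) *
        (hsNorm (A * B) ^ 2 +
          (p - 2) * eNorm ((A * B)ᵀ.mulVec (A.mulVec x)) ^ 2 / eNorm (A.mulVec x) ^ 2) := by
  change (hessianMatrix (fun z => eNorm (A *ᵥ z) ^ p) x * (B * Bᵀ)).trace = _
  rw [hessianMatrix_eNorm_mulVec_rpow p A x hAx, Matrix.smul_mul, Matrix.add_mul, Matrix.smul_mul,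
    trace_smul, trace_add, trace_smul, trace_transpose_mul_self_mul_mul_transpose,
    trace_vecMulVec_self_mul_mul_transpose, transpose_mul, ← mulVec_mulVec]
  simp only [smul_eq_mul]
  ring

/-- For `f(x) = |Ax|^p`, `p ∈ [2,∞)` and `Ax ≠ 0`, writing `D²f(x)` for the Hessian
matrix of second partial derivatives of `f` at `x`, one has
`tr(D²f(x) B Bᵀ) = p |Ax|^{p-2} (‖AB‖² + (p-2) |(AB)ᵀAx|²/|Ax|²)`. -/
theorem stmt_7 (mh m d : ℕ) (p : ℝ) (hp : 2 ≤ p)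
    (A : Matrix (Fin mh) (Fin m) ℝ) (B : Matrix (Fin m) (Fin d) ℝ)
    (x : Fin m → ℝ) (hAx : A.mulVec x ≠ 0) :
    (Matrix.of (fun i j =>
        fderiv ℝ (fun y : Fin m → ℝ =>
            fderiv ℝ (fun z : Fin m → ℝ => eNorm (A.mulVec z) ^ p) y (Pi.single j 1))
          x (Pi.single i 1)) * (B * Bᵀ)).trace =
      p * eNorm (A.mulVec x) ^ (p - 2) *
        (hsNorm (A * B) ^ 2 +
          (p - 2) * eNorm ((A * B)ᵀ.mulVec (A.mulVec x)) ^ 2 / eNorm (A.mulVec x) ^ 2) :=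
  stmt_7_general mh m d p A B x hAx
end

section
/- Let t₀ ∈ ℝ, let ϱ ∈ R_c be nondecreasing, let a ≥ 0, let κ, γ : [t₀, ∞) → [0, ∞) be locally integrable Borel functions, and let z : [t₀, ∞) → [0, ∞) be a locally bounded Borel function satisfying z(t) ≤ a + ∫_{t₀}^t ( κ(s) + γ(s) · ϱ(z(s)) ) ds for all t ≥ t₀. Then for every t ≥ t₀ such that ( a + ∫_{t₀}^t κ(s) ds , ∫_{t₀}^t γ(s) ds ) ∈ D_ϱ, it holds that sup_{s ∈ [t₀, t]} z(s) ≤ Ψ_ϱ( a + ∫_{t₀}^t κ(s) ds , ∫_{t₀}^t γ(s) ds ). -/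
open MeasureTheory Filter Set

/-! For `c > 0` with `c ≥ a + ∫_{t₀}^t κ`, put `G r = c + ∫_{t₀}^r γ ϱ(z)`. Then `z ≤ G` and
`G' = γ ϱ(z) ≤ γ ϱ(G)`, so formally `(Φ ∘ G)' ≤ γ`. Since `G` is only absolutely continuous, this is
made rigorous by telescoping over a fine partition: on a short interval `[x, y]`,
`Φ(G y) - Φ(G x) ≤ (G y - G x) / ϱ(G x) ≤ (ϱ(G y) / ϱ(G x)) ∫_x^y γ`, and uniform continuity of
`ϱ ∘ G ≥ ϱ(c) > 0` makes the ratio at most `1 + δ`. Hence `Φ(z s) ≤ Φ(c) + ∫_{t₀}^t γ`; taking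
`c = a + ∫ κ`, or letting `c ↓ 0` when this vanishes, and inverting `Φ` gives the bound by `Ψ`. -/

open Topology

theorem sub_le_mul_sub_of_forall_sub_le {f g : ℝ → ℝ} {a b C η : ℝ} (hab : a ≤ b) (hη : 0 < η)
    (h : ∀ x ∈ Icc a b, ∀ y ∈ Icc a b, x ≤ y → y - x < η → f y - f x ≤ C * (g y - g x)) :
    f b - f a ≤ C * (g b - g a) := by
  obtain ⟨n, hn⟩ := exists_nat_gt ((b - a) / η)
  have hn0 : (0 : ℝ) < n := (div_nonneg (sub_nonneg.2 hab) hη.le).trans_lt hn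
  set d := (b - a) / n
  have hd0 : 0 ≤ d := div_nonneg (sub_nonneg.2 hab) hn0.le
  have hdη : d < η := by rwa [div_lt_iff₀ hn0, mul_comm, ← div_lt_iff₀ hη]
  set p : ℕ → ℝ := fun i => a + i * d
  have hp0 : p 0 = a := by simp [p]
  have hpn : p n = b := by simp only [p, d]; field_simp; ring
  have hp_succ : ∀ i : ℕ, p (i + 1) - p i = d := fun i => by simp only [p]; push_cast; ring
  have hp_mem : ∀ i ≤ n, p i ∈ Icc a b := fun i hi => by
    have hp_mono : Monotone p := fun i j hij => by simp only [p]; gcongr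
    exact hp0 ▸ hpn ▸ ⟨hp_mono i.zero_le, hp_mono hi⟩
  have telescope (F : ℝ → ℝ) : F b - F a = ∑ i ∈ Finset.range n, (F (p (i + 1)) - F (p i)) := by
    rw [Finset.sum_range_sub (fun i => F (p i)), hpn, hp0]
  rw [telescope f, telescope g, Finset.mul_sum]
  refine Finset.sum_le_sum fun i hi => ?_
  have hi := Finset.mem_range.1 hi
  exact h _ (hp_mem i hi.le) _ (hp_mem (i + 1) hi) (by linarith [hp_succ i])
    (by rw [hp_succ]; exact hdη)

theorem sub_le_sub_of_forall_sub_le_one_add_mul {f g : ℝ → ℝ} {a b : ℝ} (hab : a ≤ b)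
    (h : ∀ δ > 0, ∃ η > 0, ∀ x ∈ Icc a b, ∀ y ∈ Icc a b, x ≤ y → y - x < η →
      f y - f x ≤ (1 + δ) * (g y - g x)) :
    f b - f a ≤ g b - g a := by
  have hlim : Tendsto (fun δ : ℝ => (1 + δ) * (g b - g a)) (𝓝[>] 0) (𝓝 (g b - g a)) := by
    have : Continuous fun δ : ℝ => (1 + δ) * (g b - g a) := by fun_prop
    simpa using this.continuousWithinAt.tendsto (x := 0) (s := Ioi 0)
  refine ge_of_tendsto hlim (eventually_nhdsWithin_of_forall fun δ (hδ : 0 < δ) => ?_)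
  obtain ⟨η, hη, hloc⟩ := h δ hδ
  exact sub_le_mul_sub_of_forall_sub_le hab hη hloc

section Phi

variable {ϱ : ℝ → ℝ}

theorem intervalIntegrable_one_div_of_pos (hϱc : ContinuousOn ϱ (Ici 0))
    (hϱpos : ∀ v > (0:ℝ), 0 < ϱ v) {u v : ℝ} (hu : 0 < u) (hv : 0 < v) :
    IntervalIntegrable (fun x => 1 / ϱ x) volume u v := by
  have hsub : uIcc u v ⊆ Ioi 0 := fun x hx => (lt_min hu hv).trans_le hx.1
  refine (continuousOn_const.div (hϱc.mono fun x hx => mem_Ici.2 (hsub hx).le) fun x hx => ?_)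
    |>.intervalIntegrable
  exact (hϱpos x (hsub hx)).ne'

theorem Phi_sub_Phi (hϱc : ContinuousOn ϱ (Ici 0)) (hϱpos : ∀ v > (0:ℝ), 0 < ϱ v)
    {u v : ℝ} (hu : 0 < u) (hv : 0 < v) :
    Phi ϱ v - Phi ϱ u = ∫ x in u..v, 1 / ϱ x :=
  intervalIntegral.integral_interval_sub_left
    (intervalIntegrable_one_div_of_pos hϱc hϱpos one_pos hv)
    (intervalIntegrable_one_div_of_pos hϱc hϱpos one_pos hu)

theorem Phi_le_Phi (hϱc : ContinuousOn ϱ (Ici 0)) (hϱpos : ∀ v > (0:ℝ), 0 < ϱ v)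
    {u v : ℝ} (hu : 0 < u) (huv : u ≤ v) : Phi ϱ u ≤ Phi ϱ v := by
  rw [← sub_nonneg, Phi_sub_Phi hϱc hϱpos hu (hu.trans_le huv)]
  exact intervalIntegral.integral_nonneg huv fun x hx =>
    (one_div_pos.2 (hϱpos x (hu.trans_le hx.1))).le

theorem Phi_sub_Phi_le_div (hϱc : ContinuousOn ϱ (Ici 0)) (hϱpos : ∀ v > (0:ℝ), 0 < ϱ v)
    (hϱmono : MonotoneOn ϱ (Ici 0)) {u v : ℝ} (hu : 0 < u) (huv : u ≤ v) :
    Phi ϱ v - Phi ϱ u ≤ (v - u) / ϱ u := by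
  rw [Phi_sub_Phi hϱc hϱpos hu (hu.trans_le huv), div_eq_mul_one_div,
    ← smul_eq_mul, ← intervalIntegral.integral_const]
  refine intervalIntegral.integral_mono_on huv
    (intervalIntegrable_one_div_of_pos hϱc hϱpos hu (hu.trans_le huv)) intervalIntegrable_const
    fun x hx => ?_
  exact one_div_le_one_div_of_le (hϱpos u hu) (hϱmono hu.le (hu.le.trans hx.1) hx.1)

theorem Phi_sub_Phi_le_of_sub_le_mul (hϱc : ContinuousOn ϱ (Ici 0))
    (hϱpos : ∀ v > (0:ℝ), 0 < ϱ v) (hϱmono : MonotoneOn ϱ (Ici 0)) {G g : ℝ → ℝ} {a b : ℝ}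
    (hab : a ≤ b) (hGc : ContinuousOn G (Icc a b)) (hGa : 0 < G a)
    (hGmono : MonotoneOn G (Icc a b)) (hgmono : MonotoneOn g (Icc a b))
    (hGg : ∀ x ∈ Icc a b, ∀ y ∈ Icc a b, x ≤ y → G y - G x ≤ ϱ (G y) * (g y - g x)) :
    Phi ϱ (G b) - Phi ϱ (G a) ≤ g b - g a := by
  have hGpos : ∀ x ∈ Icc a b, 0 < G x := fun x hx =>
    hGa.trans_le (hGmono (left_mem_Icc.2 hab) hx hx.1)
  have hϱGa_le : ∀ x ∈ Icc a b, ϱ (G a) ≤ ϱ (G x) := fun x hx =>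
    hϱmono hGa.le (hGpos x hx).le (hGmono (left_mem_Icc.2 hab) hx hx.1)
  have hϱGa : 0 < ϱ (G a) := hϱpos _ hGa
  have hUC : UniformContinuousOn (ϱ ∘ G) (Icc a b) :=
    isCompact_Icc.uniformContinuousOn_of_continuous
      (hϱc.comp hGc fun x hx => mem_Ici.2 (hGpos x hx).le)
  refine sub_le_sub_of_forall_sub_le_one_add_mul (f := Phi ϱ ∘ G) hab fun δ hδ => ?_
  obtain ⟨η, hη, hclose⟩ := Metric.uniformContinuousOn_iff.1 hUC (δ * ϱ (G a)) (by positivity)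
  refine ⟨η, hη, fun x hx y hy hxy hyx => ?_⟩
  have hϱGx : 0 < ϱ (G x) := hϱpos _ (hGpos x hx)
  have hϱGy : ϱ (G y) ≤ (1 + δ) * ϱ (G x) := by
    have hdist := hclose y hy x hx (by rwa [Real.dist_eq, abs_of_nonneg (by linarith)])
    rw [Real.dist_eq, Function.comp_apply, Function.comp_apply] at hdist
    nlinarith [le_abs_self (ϱ (G y) - ϱ (G x)), mul_le_mul_of_nonneg_left (hϱGa_le x hx) hδ.le]
  calc Phi ϱ (G y) - Phi ϱ (G x) ≤ (G y - G x) / ϱ (G x) :=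
        Phi_sub_Phi_le_div hϱc hϱpos hϱmono (hGpos x hx) (hGmono hx hy hxy)
    _ ≤ ϱ (G y) * (g y - g x) / ϱ (G x) := by gcongr; exact hGg x hx y hy hxy
    _ ≤ (1 + δ) * ϱ (G x) * (g y - g x) / ϱ (G x) := by
        gcongr; exact sub_nonneg.2 (hgmono hx hy hxy)
    _ = (1 + δ) * (g y - g x) := by field_simp

theorem Phi_le_Phi_add_integral_of_le_add_integral (hϱc : ContinuousOn ϱ (Ici 0))
    (hϱ0 : ϱ 0 = 0) (hϱpos : ∀ v > (0:ℝ), 0 < ϱ v) (hϱmono : MonotoneOn ϱ (Ici 0))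
    {γ z : ℝ → ℝ} {t₀ t c : ℝ} (ht : t₀ ≤ t) (hc : 0 < c)
    (hγ0 : ∀ s ∈ Icc t₀ t, 0 ≤ γ s) (hz0 : ∀ s ∈ Icc t₀ t, 0 ≤ z s)
    (hγint : IntervalIntegrable γ volume t₀ t)
    (hint : IntervalIntegrable (fun s => γ s * ϱ (z s)) volume t₀ t)
    (hz : ∀ r ∈ Icc t₀ t, z r ≤ c + ∫ s in t₀..r, γ s * ϱ (z s)) (hzt : 0 < z t) :
    Phi ϱ (z t) ≤ Phi ϱ c + ∫ s in t₀..t, γ s := by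
  set h : ℝ → ℝ := fun s => γ s * ϱ (z s)
  set G : ℝ → ℝ := fun r => c + ∫ s in t₀..r, h s
  set g : ℝ → ℝ := fun r => ∫ s in t₀..r, γ s
  have hIcc : Icc t₀ t = uIcc t₀ t := (uIcc_of_le ht).symm
  have hsub {f : ℝ → ℝ} (hf : IntervalIntegrable f volume t₀ t) {x y : ℝ} (hx : x ∈ Icc t₀ t)
      (hy : y ∈ Icc t₀ t) : (∫ s in t₀..y, f s) - ∫ s in t₀..x, f s = ∫ s in x..y, f s := by
    rw [hIcc] at hx hy
    exact intervalIntegral.integral_interval_sub_left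
      (hf.mono_set (uIcc_subset_uIcc left_mem_uIcc hy))
      (hf.mono_set (uIcc_subset_uIcc left_mem_uIcc hx))
  have hmono {f : ℝ → ℝ} (hf : IntervalIntegrable f volume t₀ t) (hf0 : ∀ s ∈ Icc t₀ t, 0 ≤ f s) :
      MonotoneOn (fun r => ∫ s in t₀..r, f s) (Icc t₀ t) := fun x hx y hy hxy => by
    rw [← sub_nonneg, hsub hf hx hy]
    exact intervalIntegral.integral_nonneg hxy fun s hs => hf0 s ⟨hx.1.trans hs.1, hs.2.trans hy.2⟩
  have hh0 : ∀ s ∈ Icc t₀ t, 0 ≤ h s := fun s hs => by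
    refine mul_nonneg (hγ0 s hs) ?_
    rcases (hz0 s hs).eq_or_lt with hzs | hzs
    · rw [← hzs, hϱ0]
    · exact (hϱpos _ hzs).le
  have hGmono : MonotoneOn G (Icc t₀ t) := fun x hx y hy hxy =>
    add_le_add_right (hmono hint hh0 hx hy hxy) c
  have hGt₀ : G t₀ = c := by simp [G]
  have hGc : ContinuousOn G (Icc t₀ t) := by
    rw [hIcc]
    exact continuousOn_const.add
      (intervalIntegral.continuousOn_primitive_interval' hint left_mem_uIcc)
  -- On `[x, y]` we have `z ≤ G ≤ G y`, so the integrand `γ * ϱ ∘ z` is at most `γ * ϱ (G y)`.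
  have hGg : ∀ x ∈ Icc t₀ t, ∀ y ∈ Icc t₀ t, x ≤ y → G y - G x ≤ ϱ (G y) * (g y - g x) := by
    intro x hx y hy hxy
    have hxy_sub : uIcc x y ⊆ uIcc t₀ t := hIcc ▸ uIcc_subset_Icc hx hy
    have hGxy : G y - G x = ∫ s in x..y, h s :=
      (add_sub_add_left_eq_sub _ _ c).trans (hsub hint hx hy)
    rw [hGxy, hsub hγint hx hy, mul_comm, ← intervalIntegral.integral_mul_const]
    refine intervalIntegral.integral_mono_on hxy (hint.mono_set hxy_sub)
      ((hγint.mono_set hxy_sub).mul_const _) fun s hs => ?_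
    have hs' : s ∈ Icc t₀ t := ⟨hx.1.trans hs.1, hs.2.trans hy.2⟩
    refine mul_le_mul_of_nonneg_left ?_ (hγ0 s hs')
    refine hϱmono (hz0 s hs') (hc.le.trans (hGt₀ ▸ hGmono (left_mem_Icc.2 ht) hy hy.1)) ?_
    exact (hz s hs').trans (hGmono hs' hy hs.2)
  have hcomp := Phi_sub_Phi_le_of_sub_le_mul hϱc hϱpos hϱmono ht hGc (hGt₀ ▸ hc) hGmono
    (hmono hγint hγ0) hGg
  have hzG : Phi ϱ (z t) ≤ Phi ϱ (G t) := Phi_le_Phi hϱc hϱpos hzt (hz t (right_mem_Icc.2 ht))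
  simp only [hGt₀, intervalIntegral.integral_same, sub_zero] at hcomp
  linarith

theorem intervalIntegrable_mul_comp {γ z : ℝ → ℝ} (hϱc : ContinuousOn ϱ (Ici 0))
    (hϱmono : MonotoneOn ϱ (Ici 0)) {t₀ t : ℝ} (ht : t₀ ≤ t)
    (hγint : IntervalIntegrable γ volume t₀ t) (hzm : Measurable z)
    (hz0 : ∀ s ∈ Icc t₀ t, 0 ≤ z s) (hzb : BddAbove (z '' Icc t₀ t)) :
    IntervalIntegrable (fun s => γ s * ϱ (z s)) volume t₀ t := by
  obtain ⟨M, hM⟩ := hzb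
  rw [intervalIntegrable_iff_integrableOn_Ioc_of_le ht] at hγint ⊢
  have hz0' : ∀ s ∈ Ioc t₀ t, 0 ≤ z s := fun s hs => hz0 s (Ioc_subset_Icc_self hs)
  -- `ϱ` is only continuous on `[0, ∞)`; clamping `z` at `0` changes nothing on `(t₀, t]`.
  have hmeas : Measurable fun s => ϱ (max (z s) 0) :=
    (hϱc.comp_continuous (continuous_id.max continuous_const) fun x =>
      le_max_right x 0).measurable.comp hzm
  refine hγint.mul_bdd (c := max |ϱ 0| |ϱ M|) (hmeas.aestronglyMeasurable.congr ?_) ?_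
  · filter_upwards [ae_restrict_mem measurableSet_Ioc] with s hs
    rw [max_eq_left (hz0' s hs)]
  · filter_upwards [ae_restrict_mem measurableSet_Ioc] with s hs
    have hzM : z s ≤ M := hM ⟨s, Ioc_subset_Icc_self hs, rfl⟩
    exact abs_le_max_abs_abs (hϱmono self_mem_Ici (hz0' s hs) (hz0' s hs))
      (hϱmono (hz0' s hs) ((hz0' s hs).trans hzM) hzM)

theorem coe_Phi_le_PhiE_add {x v w : ℝ} (hv : 0 ≤ v)
    (h : ∀ c > 0, v ≤ c → Phi ϱ x ≤ Phi ϱ c + w) :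
    (Phi ϱ x : EReal) ≤ PhiE ϱ v + w := by
  rcases hv.eq_or_lt with rfl | hv
  · have hinf : ((Phi ϱ x - w : ℝ) : EReal) ≤ Phi0 ϱ := by
      refine le_sInf ?_
      rintro _ ⟨c, hc, rfl⟩
      exact EReal.coe_le_coe_iff.2 (sub_le_iff_le_add.2 (h c hc hc.le))
    rw [PhiE, if_pos rfl, ← sub_add_cancel (Phi ϱ x) w, EReal.coe_add]
    gcongr
  · rw [PhiE, if_neg hv.ne', ← EReal.coe_add, EReal.coe_le_coe_iff]
    exact h v hv le_rfl

theorem bddAbove_of_mem_Drho (hϱc : ContinuousOn ϱ (Ici 0))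
    (hϱpos : ∀ v > (0:ℝ), 0 < ϱ v) {v w : ℝ} (hD : (v, w) ∈ Drho ϱ) :
    BddAbove {u : ℝ | 0 < u ∧ ((Phi ϱ u : ℝ) : EReal) ≤ PhiE ϱ v + (w : EReal)} := by
  by_contra hunb
  refine hD.2.2.not_ge (sSup_le ?_)
  rintro _ ⟨u, hu, rfl⟩
  obtain ⟨u', hu', huu'⟩ := not_bddAbove_iff.1 hunb u
  exact (EReal.coe_le_coe_iff.2 (Phi_le_Phi hϱc hϱpos hu huu'.le)).trans hu'.2

theorem le_Psi_of_coe_Phi_le (hϱc : ContinuousOn ϱ (Ici 0))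
    (hϱpos : ∀ v > (0:ℝ), 0 < ϱ v) {x v w : ℝ} (hD : (v, w) ∈ Drho ϱ) (hx : 0 < x)
    (h : (Phi ϱ x : EReal) ≤ PhiE ϱ v + w) : x ≤ Psi ϱ v w :=
  le_csSup (bddAbove_of_mem_Drho hϱc hϱpos hD) ⟨hx, h⟩

theorem Psi_nonneg {v w : ℝ} : 0 ≤ Psi ϱ v w :=
  Real.sSup_nonneg fun _ hu => hu.1.le

end Phi

theorem stmt_10_general (t₀ : ℝ) (ϱ : ℝ → ℝ) (hϱc : ContinuousOn ϱ (Set.Ici 0)) (hϱ0 : ϱ 0 = 0)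
    (hϱpos : ∀ v > (0:ℝ), 0 < ϱ v) (hϱmono : MonotoneOn ϱ (Set.Ici 0))
    (a : ℝ) (κ γ z : ℝ → ℝ)
    (hzm : Measurable z)
    (hκ0 : ∀ s, t₀ ≤ s → 0 ≤ κ s) (hγ0 : ∀ s, t₀ ≤ s → 0 ≤ γ s)
    (hz0 : ∀ s, t₀ ≤ s → 0 ≤ z s)
    (hκint : ∀ t, t₀ ≤ t → IntervalIntegrable κ volume t₀ t)
    (hγint : ∀ t, t₀ ≤ t → IntervalIntegrable γ volume t₀ t)
    (hzb : ∀ t, t₀ ≤ t → BddAbove (z '' Set.Icc t₀ t))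
    (hz : ∀ t, t₀ ≤ t → z t ≤ a + ∫ s in t₀..t, (κ s + γ s * ϱ (z s)))
    (t : ℝ) (ht : t₀ ≤ t)
    (hD : ((a + ∫ s in t₀..t, κ s), (∫ s in t₀..t, γ s)) ∈ Drho ϱ) :
    ∀ s ∈ Set.Icc t₀ t,
      z s ≤ Psi ϱ (a + ∫ s in t₀..t, κ s) (∫ s in t₀..t, γ s) := by
  intro s hs
  have hint : ∀ r ∈ Icc t₀ s, IntervalIntegrable (fun u => γ u * ϱ (z u)) volume t₀ r :=
    fun r hr => intervalIntegrable_mul_comp hϱc hϱmono hr.1 (hγint r hr.1) hzm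
      (fun u hu => hz0 u hu.1) (hzb r hr.1)
  have hnonneg {f : ℝ → ℝ} (hf : ∀ u, t₀ ≤ u → 0 ≤ f u) : 0 ≤ᵐ[volume.restrict (Ioc t₀ t)] f :=
    (ae_restrict_mem measurableSet_Ioc).mono fun u hu => hf u hu.1.le
  rcases (hz0 s hs.1).eq_or_lt with hzs | hzs
  · exact hzs ▸ Psi_nonneg
  refine le_Psi_of_coe_Phi_le hϱc hϱpos hD hzs (coe_Phi_le_PhiE_add hD.1 fun c hc hVc => ?_)
  have hle : ∀ r ∈ Icc t₀ s, z r ≤ c + ∫ u in t₀..r, γ u * ϱ (z u) := fun r hr => calc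
    z r ≤ a + ∫ u in t₀..r, (κ u + γ u * ϱ (z u)) := hz r hr.1
    _ = a + (∫ u in t₀..r, κ u) + ∫ u in t₀..r, γ u * ϱ (z u) := by
      rw [intervalIntegral.integral_add (hκint r hr.1) (hint r hr), add_assoc]
    _ ≤ c + ∫ u in t₀..r, γ u * ϱ (z u) := by
      have := intervalIntegral.integral_mono_interval le_rfl hr.1 (hr.2.trans hs.2) (hnonneg hκ0)
        (hκint t ht)
      linarith
  calc Phi ϱ (z s) ≤ Phi ϱ c + ∫ u in t₀..s, γ u :=
        Phi_le_Phi_add_integral_of_le_add_integral hϱc hϱ0 hϱpos hϱmono hs.1 hc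
          (fun r hr => hγ0 r hr.1) (fun r hr => hz0 r hr.1) (hγint s hs.1)
          (hint s (right_mem_Icc.2 hs.1)) hle hzs
    _ ≤ Phi ϱ c + ∫ u in t₀..t, γ u := by
      gcongr
      exact intervalIntegral.integral_mono_interval le_rfl hs.1 hs.2 (hnonneg hγ0) (hγint t ht)

/-- Bihari-type comparison estimate: if `ϱ ∈ R_c` is nondecreasing, `a ≥ 0`, `κ, γ ≥ 0`
are locally integrable, and a locally bounded Borel function `z ≥ 0` satisfies
`z(t) ≤ a + ∫_{t₀}^t (κ(s) + γ(s) ϱ(z(s))) ds` for all `t ≥ t₀`, then for every `t ≥ t₀`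
with `(a + ∫_{t₀}^t κ, ∫_{t₀}^t γ) ∈ D_ϱ`,
`sup_{s ∈ [t₀,t]} z(s) ≤ Ψ_ϱ(a + ∫_{t₀}^t κ, ∫_{t₀}^t γ)`. -/
theorem stmt_10 (t₀ : ℝ) (ϱ : ℝ → ℝ) (hϱc : ContinuousOn ϱ (Set.Ici 0)) (hϱ0 : ϱ 0 = 0)
    (hϱpos : ∀ v > (0:ℝ), 0 < ϱ v) (hϱmono : MonotoneOn ϱ (Set.Ici 0))
    (a : ℝ) (ha : 0 ≤ a) (κ γ z : ℝ → ℝ)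
    (hκm : Measurable κ) (hγm : Measurable γ) (hzm : Measurable z)
    (hκ0 : ∀ s, t₀ ≤ s → 0 ≤ κ s) (hγ0 : ∀ s, t₀ ≤ s → 0 ≤ γ s)
    (hz0 : ∀ s, t₀ ≤ s → 0 ≤ z s)
    (hκint : ∀ t, t₀ ≤ t → IntervalIntegrable κ volume t₀ t)
    (hγint : ∀ t, t₀ ≤ t → IntervalIntegrable γ volume t₀ t)
    (hzb : ∀ t, t₀ ≤ t → BddAbove (z '' Set.Icc t₀ t))
    (hz : ∀ t, t₀ ≤ t → z t ≤ a + ∫ s in t₀..t, (κ s + γ s * ϱ (z s)))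
    (t : ℝ) (ht : t₀ ≤ t)
    (hD : ((a + ∫ s in t₀..t, κ s), (∫ s in t₀..t, γ s)) ∈ Drho ϱ) :
    ∀ s ∈ Set.Icc t₀ t,
      z s ≤ Psi ϱ (a + ∫ s in t₀..t, κ s) (∫ s in t₀..t, γ s) :=
  stmt_10_general t₀ ϱ hϱc hϱ0 hϱpos hϱmono a κ γ z hzm hκ0 hγ0 hz0 hκint hγint hzb hz t ht hD
end

section
/- Let t₀ ≤ t₁ be real numbers, let γ : [t₀, ∞) → ℝ be locally integrable, let l ∈ ℕ, let α₁, …, α_l ∈ (0, ∞) with α₁ < ⋯ < α_l, let λ₁, …, λ_l ∈ (−∞, 0] with λ_l < 0, and let s₁, …, s_l ∈ ℝ with s_k ≤ t₁ for all k and s_l ≤ t₀. Assume that γ(u) ≤ ∑_{k=1}^{l} λ_k · α_k · (u − s_k)^{α_k − 1} for almost every u ∈ [t₁, ∞). Then there exists a constant c ≥ 0 such that exp(∫_{t₀}^t γ(u) du) ≤ c · exp(λ_l · (t − t₀)^{α_l}) for all t ∈ [t₀, ∞). -/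
open MeasureTheory Filter

lemma aux_intble {s t₁ t : ℝ} {a : ℝ} (hs : s ≤ t₁) (ha : 0 < a) :
    IntervalIntegrable (fun u => (u - s) ^ (a - 1)) volume t₁ t := by
  have h : IntervalIntegrable (fun x : ℝ => x ^ (a - 1)) volume (t₁ - s) (t - s) :=
    intervalIntegral.intervalIntegrable_rpow' (by linarith)
  have := h.comp_sub_right s
  simpa using this

lemma aux_val {s t₁ t : ℝ} {a : ℝ} (hs : s ≤ t₁) (ha : 0 < a) :
    ∫ u in t₁..t, (u - s) ^ (a - 1) = ((t - s) ^ a - (t₁ - s) ^ a) / a := by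
  rw [intervalIntegral.integral_comp_sub_right (fun x => x ^ (a - 1)) s]
  rw [integral_rpow (Or.inl (by linarith))]
  ring_nf

/-- The exponential domination lemma behind the paper's exponential `p`-th moment
stability result (Corollary 3.12(ii)): if `γ(u) ≤ ∑_k λ_k α_k (u-s_k)^{α_k-1}` a.e. on
`[t₁,∞)` with `0 < α₁ < ⋯ < α_l`, `λ_k ≤ 0`, `λ_l < 0`, `s_k ≤ t₁` and `s_l ≤ t₀ ≤ t₁`,
then `exp(∫_{t₀}^t γ) ≤ c exp(λ_l (t-t₀)^{α_l})` for all `t ≥ t₀` and some `c ≥ 0`.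
(The index set `{1, …, l}` with `l ≥ 1` is realised as `Fin (l+1)`.) -/
theorem stmt_13 (t₀ t₁ : ℝ) (ht : t₀ ≤ t₁) (γ : ℝ → ℝ)
    (hγint : ∀ t, t₀ ≤ t → IntervalIntegrable γ volume t₀ t)
    (l : ℕ) (α lam s : Fin (l + 1) → ℝ)
    (hαpos : ∀ k, 0 < α k) (hαmono : StrictMono α)
    (hlam : ∀ k, lam k ≤ 0) (hlaml : lam (Fin.last l) < 0)
    (hs : ∀ k, s k ≤ t₁) (hsl : s (Fin.last l) ≤ t₀)
    (hγle : ∀ᵐ u ∂(volume.restrict (Set.Ici t₁)),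
      γ u ≤ ∑ k, lam k * α k * (u - s k) ^ (α k - 1)) :
    ∃ c, 0 ≤ c ∧ ∀ t, t₀ ≤ t →
      Real.exp (∫ u in t₀..t, γ u) ≤
        c * Real.exp (lam (Fin.last l) * (t - t₀) ^ α (Fin.last l)) := by
  set L := Fin.last l
  -- continuity bound on [t₀, t₁]
  have hcont : ContinuousOn
      (fun t => Real.exp ((∫ u in t₀..t, γ u) - lam L * (t - t₀) ^ α L))
      (Set.Icc t₀ t₁) := by
    apply Real.continuous_exp.comp_continuousOn
    apply ContinuousOn.sub
    · have h := intervalIntegral.continuousOn_primitive_interval'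
        (μ := volume) (f := γ) (b₁ := t₀) (b₂ := t₁) (a := t₀)
        (hγint t₁ ht) Set.left_mem_uIcc
      exact h.mono (by rw [Set.uIcc_of_le ht])
    · apply ContinuousOn.mul continuousOn_const
      intro x hx
      apply ContinuousAt.continuousWithinAt
      exact ContinuousAt.comp
        (Real.continuousAt_rpow_const _ _ (Or.inr (hαpos L).le))
        (by fun_prop)
  obtain ⟨x₀, hx₀mem, hx₀⟩ := (isCompact_Icc (a := t₀) (b := t₁)).exists_isMaxOn
    ⟨t₀, le_refl _, ht⟩ hcont
  set c₁ := Real.exp ((∫ u in t₀..x₀, γ u) - lam L * (x₀ - t₀) ^ α L)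
  set c₂ := Real.exp ((∫ u in t₀..t₁, γ u) - lam L * (t₁ - s L) ^ α L)
  refine ⟨max c₁ c₂, le_trans (Real.exp_pos _).le (le_max_left _ _), ?_⟩
  intro t htt
  rcases le_total t t₁ with h1 | h1
  · -- t ∈ [t₀, t₁]
    have : Real.exp ((∫ u in t₀..t, γ u) - lam L * (t - t₀) ^ α L) ≤ c₁ :=
      hx₀ (⟨htt, h1⟩ : t ∈ Set.Icc t₀ t₁)
    calc Real.exp (∫ u in t₀..t, γ u)
        = Real.exp ((∫ u in t₀..t, γ u) - lam L * (t - t₀) ^ α L) *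
          Real.exp (lam L * (t - t₀) ^ α L) := by
          rw [← Real.exp_add]; ring_nf
      _ ≤ max c₁ c₂ * Real.exp (lam L * (t - t₀) ^ α L) := by
          apply mul_le_mul_of_nonneg_right _ (Real.exp_pos _).le
          exact le_trans this (le_max_left _ _)
  · -- t ≥ t₁
    have ht0t : t₀ ≤ t := le_trans ht h1
    have hint1 : IntervalIntegrable γ volume t₀ t₁ := hγint t₁ ht
    have hint2 : IntervalIntegrable γ volume t₁ t := hint1.symm.trans (hγint t ht0t)
    have hsplit : (∫ u in t₀..t, γ u) = (∫ u in t₀..t₁, γ u) + ∫ u in t₁..t, γ u :=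
      (intervalIntegral.integral_add_adjacent_intervals hint1 hint2).symm
    set g := fun u => ∑ k, lam k * α k * (u - s k) ^ (α k - 1)
    have hgintk : ∀ k : Fin (l + 1),
        IntervalIntegrable (fun u => lam k * α k * (u - s k) ^ (α k - 1)) volume t₁ t :=
      fun k => (aux_intble (t := t) (hs k) (hαpos k)).const_mul _
    have hgint : IntervalIntegrable g volume t₁ t := by
      have := IntervalIntegrable.sum
        (f := fun (k : Fin (l + 1)) (u : ℝ) => lam k * α k * (u - s k) ^ (α k - 1))
        Finset.univ (fun k _ => hgintk k)
      have heq : (∑ k : Fin (l + 1), fun (u : ℝ) => lam k * α k * (u - s k) ^ (α k - 1)) = g := by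
        funext u; simp [g]
      exact heq ▸ this
    have hmono : (∫ u in t₁..t, γ u) ≤ ∫ u in t₁..t, g u := by
      apply intervalIntegral.integral_mono_ae_restrict h1 hint2 hgint
      exact ae_restrict_of_ae_restrict_of_subset (Set.Icc_subset_Ici_self) hγle
    have hgval : (∫ u in t₁..t, g u) =
        ∑ k, lam k * ((t - s k) ^ α k - (t₁ - s k) ^ α k) := by
      rw [intervalIntegral.integral_finset_sum (fun k _ => hgintk k)]
      apply Finset.sum_congr rfl
      intro k _
      rw [intervalIntegral.integral_const_mul, aux_val (t := t) (hs k) (hαpos k)]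
      have hk : α k ≠ 0 := (hαpos k).ne'
      field_simp
    -- each summand is ≤ 0
    have hterm : ∀ k : Fin (l + 1),
        lam k * ((t - s k) ^ α k - (t₁ - s k) ^ α k) ≤ 0 := by
      intro k
      apply mul_nonpos_of_nonpos_of_nonneg (hlam k)
      have : (t₁ - s k) ^ α k ≤ (t - s k) ^ α k :=
        Real.rpow_le_rpow (by linarith [hs k]) (by linarith) (hαpos k).le
      linarith
    have hsum : (∑ k, lam k * ((t - s k) ^ α k - (t₁ - s k) ^ α k)) ≤
        lam L * ((t - s L) ^ α L - (t₁ - s L) ^ α L) := by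
      rw [← Finset.add_sum_erase _ _ (Finset.mem_univ L)]
      have : (∑ k ∈ Finset.univ.erase L,
          lam k * ((t - s k) ^ α k - (t₁ - s k) ^ α k)) ≤ 0 :=
        Finset.sum_nonpos (fun k _ => hterm k)
      linarith
    have hlast : lam L * (t - s L) ^ α L ≤ lam L * (t - t₀) ^ α L := by
      apply mul_le_mul_of_nonpos_left _ hlaml.le
      exact Real.rpow_le_rpow (by linarith) (by linarith) (hαpos L).le
    have key : (∫ u in t₀..t, γ u) ≤
        ((∫ u in t₀..t₁, γ u) - lam L * (t₁ - s L) ^ α L) + lam L * (t - t₀) ^ α L := by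
      have h4 := le_trans hmono (hgval ▸ hsum)
      rw [hsplit]
      linarith [hlast]
    calc Real.exp (∫ u in t₀..t, γ u)
        ≤ c₂ * Real.exp (lam L * (t - t₀) ^ α L) := by
          rw [← Real.exp_add]
          exact Real.exp_le_exp.mpr key
      _ ≤ max c₁ c₂ * Real.exp (lam L * (t - t₀) ^ α L) :=
          mul_le_mul_of_nonneg_right (le_max_right _ _) (Real.exp_pos _).le
end

section
/- Let t₁ ∈ ℝ, let γ : [t₁, ∞) → ℝ be locally integrable, let l ∈ ℕ, let α₁, …, α_l ∈ (0, ∞) with α₁ < ⋯ < α_l, let λ₁, …, λ_l ∈ ℝ with λ_l < 0, and let s₁, …, s_l ∈ ℝ with s_k ≤ t₁ for all k. Assume that γ(u) ≤ ∑_{k=1}^{l} λ_k · α_k · (u − s_k)^{α_k − 1} for almost every u ∈ [t₁, ∞). Then for every ε > 0 and every δ > 0 the series ∑_{n=1}^{∞} exp( ε · ∫_{t₁}^{t₁ + δ(n−1)} γ(u) du ) converges. -/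
/-!
Integrating the bound gives `∫_{t₁}^{T} γ ≤ P(T) - P(t₁)` with
`P(x) = ∑ λ_k (x - s_k)^{α_k}`. The exponents are distinct, so `P(x) ~ λ_l x^{α_l}` with
`λ_l < 0`; along `T = t₁ + δn` the exponent `ε ∫ γ` is therefore eventually below
`-c n^{α_l}` for some `c > 0`, and `exp(-c n^{α_l}) ≤ n⁻²` for large `n` because
`log n = o(n^{α_l})`.
-/

open MeasureTheory Filter Asymptotics Topology

theorem Real.isLittleO_rpow_rpow_atTop {p q : ℝ} (hpq : p < q) :
    (fun x : ℝ => x ^ p) =o[atTop] fun x => x ^ q := by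
  refine (isLittleO_iff_tendsto' ?_).mpr ?_
  · filter_upwards [eventually_gt_atTop 0] with x hx hxq
    exact absurd hxq (Real.rpow_pos_of_pos hx q).ne'
  · refine (tendsto_rpow_neg_atTop (sub_pos.mpr hpq)).congr' ?_
    filter_upwards [eventually_gt_atTop 0] with x hx
    rw [← Real.rpow_sub hx, neg_sub]

theorem Real.isEquivalent_add_const_rpow (b p : ℝ) :
    (fun x : ℝ => (x + b) ^ p) ~[atTop] fun x => x ^ p := by
  refine isEquivalent_of_tendsto_one ?_
  have hratio : Tendsto (fun x : ℝ => (x + b) / x) atTop (𝓝 1) := by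
    have h := (tendsto_inv_atTop_zero.const_mul b).const_add (1 : ℝ)
    rw [mul_zero, add_zero] at h
    refine h.congr' ?_
    filter_upwards [eventually_gt_atTop 0] with x hx
    field_simp
  have hpow := (Real.continuousAt_rpow_const 1 p (Or.inl one_ne_zero)).tendsto.comp hratio
  rw [Real.one_rpow] at hpow
  refine hpow.congr' ?_
  filter_upwards [eventually_gt_atTop (max 0 (-b))] with x hx
  rw [max_lt_iff] at hx
  rw [Function.comp_apply, Pi.div_apply, Real.div_rpow (by linarith) hx.1.le]

theorem isEquivalent_natCast_affine_rpow (t δ a : ℝ) (hδ : 0 < δ) :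
    (fun n : ℕ => (t + δ * n) ^ a) ~[atTop] fun n => δ ^ a * (n : ℝ) ^ a := by
  have hδn : Tendsto (fun n : ℕ => δ * n) atTop atTop :=
    tendsto_natCast_atTop_atTop.const_mul_atTop hδ
  refine ((Real.isEquivalent_add_const_rpow t a).comp_tendsto hδn).congr_left ?_
    |>.trans_eventuallyEq ?_
  · exact .of_eq (funext fun n => by simp [add_comm])
  · exact .of_eq (funext fun n => by simp [Real.mul_rpow hδ.le (Nat.cast_nonneg n)])

theorem isEquivalent_sum_mul_sub_rpow {ι : Type*} [Fintype ι] [DecidableEq ι]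
    {α : ι → ℝ} {i : ι} (hmax : ∀ k ≠ i, α k < α i) (hαi : 0 < α i) (lam s : ι → ℝ)
    (hlam : lam i ≠ 0) (C : ℝ) :
    (fun x => ∑ k, lam k * (x - s k) ^ α k - C) ~[atTop] fun x => lam i * x ^ α i := by
  have hshift (k : ι) : (fun x : ℝ => (x - s k) ^ α k) ~[atTop] fun x => x ^ α k := by
    simpa only [sub_eq_add_neg] using Real.isEquivalent_add_const_rpow (-s k) (α k)
  have hlead : (fun x => lam i * (x - s i) ^ α i) ~[atTop] fun x => lam i * x ^ α i :=
    IsEquivalent.refl.mul (hshift i)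
  have hlower : (fun x => ∑ k ∈ Finset.univ.erase i, lam k * (x - s k) ^ α k) =o[atTop]
      fun x => x ^ α i :=
    IsLittleO.fun_sum fun k hk => ((hshift k).isBigO.trans_isLittleO
      (Real.isLittleO_rpow_rpow_atTop (hmax k (Finset.ne_of_mem_erase hk)))).const_mul_left
        (lam k)
  have hconst : (fun _ : ℝ => C) =o[atTop] fun x => x ^ α i :=
    isLittleO_const_left.mpr <| Or.inr <|
      tendsto_norm_atTop_atTop.comp (tendsto_rpow_atTop hαi)
  refine ((hlower.sub hconst).const_mul_right hlam).add_isEquivalent hlead |>.congr_left ?_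
  refine .of_eq (funext fun x => ?_)
  simp only [Pi.add_apply, ← Finset.sum_erase_add _ _ (Finset.mem_univ i)]
  ring

theorem Asymptotics.IsEquivalent.eventually_le_half {α : Type*} {l : Filter α} {u v : α → ℝ}
    (h : u ~[l] v) (hv : ∀ᶠ x in l, v x ≤ 0) : ∀ᶠ x in l, u x ≤ v x / 2 := by
  filter_upwards [h.isLittleO.def one_half_pos, hv] with x hx hvx
  rw [Real.norm_eq_abs, Real.norm_eq_abs, abs_of_nonpos hvx, Pi.sub_apply] at hx
  linarith [le_abs_self (u x - v x)]

theorem intervalIntegrable_sub_rpow {α : ℝ} (hα : 0 < α) (s a b : ℝ) :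
    IntervalIntegrable (fun u => (u - s) ^ (α - 1)) volume a b := by
  simpa using (intervalIntegral.intervalIntegrable_rpow' (a := a - s) (b := b - s)
    (by linarith : -1 < α - 1)).comp_sub_right s

theorem integral_mul_sub_rpow {α : ℝ} (hα : 0 < α) (s a b : ℝ) :
    ∫ u in a..b, α * (u - s) ^ (α - 1) = (b - s) ^ α - (a - s) ^ α := by
  rw [intervalIntegral.integral_const_mul,
    intervalIntegral.integral_comp_sub_right (fun v => v ^ (α - 1)) s,
    integral_rpow (Or.inl (by linarith)), sub_add_cancel]
  field_simp

section PowerSum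

variable {ι : Type*} [Fintype ι] {α : ι → ℝ}

theorem intervalIntegrable_sum_mul_sub_rpow (hα : ∀ k, 0 < α k) (c s : ι → ℝ) (a b : ℝ) :
    IntervalIntegrable (fun u => ∑ k, c k * (u - s k) ^ (α k - 1)) volume a b := by
  simpa only [Finset.sum_fn] using IntervalIntegrable.sum Finset.univ fun k _ =>
    (intervalIntegrable_sub_rpow (hα k) (s k) a b).const_mul (c k)

theorem integral_sum_mul_sub_rpow (hα : ∀ k, 0 < α k) (lam s : ι → ℝ) (a b : ℝ) :
    ∫ u in a..b, ∑ k, lam k * α k * (u - s k) ^ (α k - 1)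
      = ∑ k, lam k * (b - s k) ^ α k - ∑ k, lam k * (a - s k) ^ α k := by
  rw [intervalIntegral.integral_finsetSum fun k _ =>
    (intervalIntegrable_sub_rpow (hα k) (s k) a b).const_mul _, ← Finset.sum_sub_distrib]
  refine Finset.sum_congr rfl fun k _ => ?_
  simp only [mul_assoc, intervalIntegral.integral_const_mul, integral_mul_sub_rpow (hα k),
    mul_sub]

end PowerSum

theorem summable_exp_of_eventually_le_neg_rpow {f : ℕ → ℝ} {c a : ℝ} (hc : 0 < c)
    (ha : 0 < a) (hf : ∀ᶠ n in atTop, f n ≤ -c * (n : ℝ) ^ a) :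
    Summable fun n => Real.exp (f n) := by
  refine (Real.summable_nat_rpow.mpr (by norm_num : (-2 : ℝ) < -1))
    |>.of_norm_bounded_eventually_nat ?_
  have hlog : ∀ᶠ n : ℕ in atTop, Real.log n ≤ c / 2 * (n : ℝ) ^ a := by
    filter_upwards [tendsto_natCast_atTop_atTop.eventually
      ((isLittleO_log_rpow_atTop ha).def (half_pos hc))] with n hn
    rw [Real.norm_eq_abs, Real.norm_eq_abs, abs_of_nonneg (Real.rpow_nonneg n.cast_nonneg a)]
      at hn
    exact (le_abs_self _).trans hn
  filter_upwards [hf, hlog, eventually_gt_atTop 0] with n hfn hlogn hn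
  have hn' : (0 : ℝ) < n := Nat.cast_pos.mpr hn
  rw [Real.norm_eq_abs, abs_of_pos (Real.exp_pos _), Real.rpow_def_of_pos hn', Real.exp_le_exp]
  linarith

theorem stmt_14_general (t₁ : ℝ) (γ : ℝ → ℝ)
    (hγint : ∀ t, t₁ ≤ t → IntervalIntegrable γ volume t₁ t)
    (l : ℕ) (α lam s : Fin (l + 1) → ℝ)
    (hαpos : ∀ k, 0 < α k) (hαmono : StrictMono α)
    (hlaml : lam (Fin.last l) < 0)
    (hγle : ∀ᵐ u ∂(volume.restrict (Set.Ici t₁)),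
      γ u ≤ ∑ k, lam k * α k * (u - s k) ^ (α k - 1)) :
    ∀ ε > (0:ℝ), ∀ δ > (0:ℝ),
      Summable (fun n : ℕ => Real.exp (ε * ∫ u in t₁..(t₁ + δ * n), γ u)) := by
  intro ε hε δ hδ
  set a := α (Fin.last l)
  set P : ℝ → ℝ := fun x => ∑ k, lam k * (x - s k) ^ α k
  have hbound (n : ℕ) : ∫ u in t₁..(t₁ + δ * n), γ u ≤ P (t₁ + δ * n) - P t₁ := by
    have hT : t₁ ≤ t₁ + δ * n := le_add_of_nonneg_right (by positivity)
    rw [← integral_sum_mul_sub_rpow hαpos]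
    exact intervalIntegral.integral_mono_ae_restrict hT (hγint _ hT)
      (intervalIntegrable_sum_mul_sub_rpow hαpos _ s _ _)
      (ae_restrict_of_ae_restrict_of_subset Set.Icc_subset_Ici_self hγle)
  have hmax (k : Fin (l + 1)) (hk : k ≠ Fin.last l) : α k < a :=
    hαmono (Fin.lt_last_iff_ne_last.mpr hk)
  have hP := isEquivalent_sum_mul_sub_rpow hmax (hαpos _) lam s hlaml.ne (P t₁)
  have hT : Tendsto (fun n : ℕ => t₁ + δ * n) atTop atTop :=
    tendsto_atTop_add_const_left _ t₁ (tendsto_natCast_atTop_atTop.const_mul_atTop hδ)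
  have hasymp : (fun n : ℕ => P (t₁ + δ * n) - P t₁) ~[atTop]
      fun n => lam (Fin.last l) * (δ ^ a * (n : ℝ) ^ a) :=
    (hP.comp_tendsto hT).trans (IsEquivalent.refl.mul (isEquivalent_natCast_affine_rpow t₁ δ a hδ))
  have hδa : 0 < δ ^ a := Real.rpow_pos_of_pos hδ a
  have hlead (n : ℕ) : lam (Fin.last l) * (δ ^ a * (n : ℝ) ^ a) ≤ 0 :=
    mul_nonpos_of_nonpos_of_nonneg hlaml.le (by positivity)
  refine summable_exp_of_eventually_le_neg_rpow (a := a)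
    (half_pos (mul_pos hε (mul_pos (neg_pos.mpr hlaml) hδa))) (hαpos _) ?_
  filter_upwards [hasymp.eventually_le_half (.of_forall hlead)] with n hn
  calc ε * ∫ u in t₁..(t₁ + δ * n), γ u ≤ ε * (P (t₁ + δ * n) - P t₁) := by
        gcongr; exact hbound n
    _ ≤ ε * (lam (Fin.last l) * (δ ^ a * (n : ℝ) ^ a) / 2) := by gcongr
    _ = -(ε * (-lam (Fin.last l) * δ ^ a) / 2) * (n : ℝ) ^ a := by ring

/-- The summability lemma behind the paper's pathwise exponential stability result
(Corollary 3.22): if `γ(u) ≤ ∑_k λ_k α_k (u-s_k)^{α_k-1}` a.e. on `[t₁,∞)` with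
`0 < α₁ < ⋯ < α_l`, `λ_l < 0` and `s_k ≤ t₁`, then for all `ε, δ > 0` the series
`∑_{n=1}^∞ exp(ε ∫_{t₁}^{t₁+δ(n-1)} γ)` converges.
(The index set `{1, …, l}` with `l ≥ 1` is realised as `Fin (l+1)`.) -/
theorem stmt_14 (t₁ : ℝ) (γ : ℝ → ℝ)
    (hγint : ∀ t, t₁ ≤ t → IntervalIntegrable γ volume t₁ t)
    (l : ℕ) (α lam s : Fin (l + 1) → ℝ)
    (hαpos : ∀ k, 0 < α k) (hαmono : StrictMono α)
    (hlaml : lam (Fin.last l) < 0) (hs : ∀ k, s k ≤ t₁)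
    (hγle : ∀ᵐ u ∂(volume.restrict (Set.Ici t₁)),
      γ u ≤ ∑ k, lam k * α k * (u - s k) ^ (α k - 1)) :
    ∀ ε > (0:ℝ), ∀ δ > (0:ℝ),
      Summable (fun n : ℕ => Real.exp (ε * ∫ u in t₁..(t₁ + δ * n), γ u)) :=
  stmt_14_general t₁ γ hγint l α lam s hαpos hαmono hlaml hγle
end
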